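/- arXiv:2009.08377 — 5 statements merged into one kernel-verified Lean document; each statement's English description precedes it below -/
import Mathlib

section
/- Let n be a natural number and let U ⊆ ℂ be a nonempty open set which is simply connected as a topological subspace and with 0 ∉ U. Let h : ℂ → ℂ be complex-differentiable on U with h(z) ≠ 0 for every z ∈ U, and suppose that z^n = h(z)^n · h'(z)^2 for all z ∈ U, where h' denotes the complex derivative. Assume there is a continuous path γ : [0,1] → ℂ such that γ(t) ∈ U for all t < 1, γ(1) = 0, and h(γ(t)) tends to 0 as t tends to 1 from the left. Then h(z)^(n+2) = z^(n+2) for every z ∈ U. -/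
/-!
Differentiating `z ^ n = h ^ n * h' ^ 2` shows that `K = h ^ n * (z * h' - h) ^ 2` is locally
constant, hence constant on the connected set `U`. Using the equation once more,
`K = z ^ (n + 2) + h ^ (n + 2) - 2 w` with `w ^ 2 = z ^ (n + 2) * h ^ (n + 2)`, so `K` tends to `0`
along the path, where both `z` and `h` tend to `0`. Thus `K = 0`, i.e. `z * h' = h`, and then
`h ^ (n + 2) = h ^ n * (z * h') ^ 2 = z ^ (n + 2)`.
-/

open Filter Set Topology

lemma natCast_mul_pow_sub_one_mul {R : Type*} [CommSemiring R] (n : ℕ) (x : R) :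
    (n : R) * x ^ (n - 1) * x = n * x ^ n := by
  cases n <;> simp [pow_succ, mul_assoc]

lemma tendsto_zero_of_tendsto_sq_zero {α 𝕜 : Type*} [NormedDivisionRing 𝕜] {l : Filter α}
    {f : α → 𝕜} (hf : Tendsto (fun x => f x ^ 2) l (𝓝 0)) : Tendsto f l (𝓝 0) := by
  rw [tendsto_zero_iff_norm_tendsto_zero] at hf ⊢
  have hsqrt := (Real.continuous_sqrt.tendsto 0).comp hf
  simpa [Function.comp_def, norm_pow, Real.sqrt_sq (norm_nonneg _)] using hsqrt

lemma tendsto_nhdsLT_of_continuousOn_Icc {α : Type*} [TopologicalSpace α] {γ : ℝ → α}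
    {a b : ℝ} (hab : a < b) (hγ : ContinuousOn γ (Icc a b)) : Tendsto γ (𝓝[<] b) (𝓝 (γ b)) :=
  (hγ b ⟨hab.le, le_rfl⟩).mono_left <| nhdsWithin_le_of_mem <|
    mem_of_superset (Ioo_mem_nhdsLT hab) Ioo_subset_Icc_self

noncomputable def rotationDefect (n : ℕ) (h : ℂ → ℂ) (z : ℂ) : ℂ :=
  h z ^ n * (z * deriv h z - h z) ^ 2

section RotationDefect

variable {n : ℕ} {h : ℂ → ℂ} {z : ℂ}

lemma hasDerivAt_rotationDefect {U : Set ℂ} (hU : IsOpen U) (hdiff : DifferentiableOn ℂ h U)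
    (heq : ∀ z ∈ U, z ^ n = h z ^ n * deriv h z ^ 2) (hz : z ∈ U) (hz0 : z ≠ 0) :
    HasDerivAt (rotationDefect n h) 0 z := by
  have hh : HasDerivAt h (deriv h z) z := (hdiff.differentiableAt (hU.mem_nhds hz)).hasDerivAt
  have hh' : HasDerivAt (deriv h) (deriv (deriv h) z) z :=
    (((hdiff.analyticOnNhd hU).deriv z hz).differentiableAt).hasDerivAt
  set a := h z
  set b := deriv h z
  have hC : z ^ n = a ^ n * b ^ 2 := heq z hz
  have hb : b ≠ 0 := ne_zero_pow two_ne_zero (right_ne_zero_of_mul (hC ▸ pow_ne_zero n hz0))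
  have hconstraint := (hasDerivAt_pow n z).unique <|
    ((hh.fun_pow n).fun_mul (hh'.fun_pow 2)).congr_of_eventuallyEq <|
      eventually_of_mem (hU.mem_nhds hz) heq
  refine ((hh.fun_pow n).fun_mul
    ((((hasDerivAt_id' z).fun_mul hh').fun_sub hh).fun_pow 2)).congr_deriv ?_
  -- `h' * K' = (z * h' - h) * (z * (derivative of the equation) - n * (the equation))`
  refine mul_left_cancel₀ hb ?_
  push_cast at hconstraint ⊢
  linear_combination (-(z * (z * b - a))) * hconstraint + ((n : ℂ) * (z * b - a)) * hC
    + (z * b - a) * natCast_mul_pow_sub_one_mul n z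
    - (z * b - a) * b ^ 2 * natCast_mul_pow_sub_one_mul n a

lemma rotationDefect_eq (heq : z ^ n = h z ^ n * deriv h z ^ 2) :
    rotationDefect n h z = z ^ (n + 2) + h z ^ (n + 2) - 2 * (z * h z ^ (n + 1) * deriv h z) := by
  unfold rotationDefect
  linear_combination (-z ^ 2) * heq

lemma tendsto_rotationDefect_zero {α : Type*} {l : Filter α} {g : α → ℂ}
    (hg : Tendsto g l (𝓝 0)) (hhg : Tendsto (fun x => h (g x)) l (𝓝 0))
    (heq : ∀ᶠ x in l, g x ^ n = h (g x) ^ n * deriv h (g x) ^ 2) :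
    Tendsto (fun x => rotationDefect n h (g x)) l (𝓝 0) := by
  have hu : Tendsto (fun x => g x ^ (n + 2)) l (𝓝 0) := by simpa using hg.pow (n + 2)
  have hv : Tendsto (fun x => h (g x) ^ (n + 2)) l (𝓝 0) := by simpa using hhg.pow (n + 2)
  have hw : Tendsto (fun x => g x * h (g x) ^ (n + 1) * deriv h (g x)) l (𝓝 0) := by
    refine tendsto_zero_of_tendsto_sq_zero ?_
    have huv : Tendsto (fun x => g x ^ (n + 2) * h (g x) ^ (n + 2)) l (𝓝 0) := by
      simpa using hu.mul hv
    refine huv.congr' ?_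
    filter_upwards [heq] with x hx
    linear_combination (g x ^ 2 * h (g x) ^ (n + 2)) * hx
  have hsum : Tendsto (fun x => g x ^ (n + 2) + h (g x) ^ (n + 2)
      - 2 * (g x * h (g x) ^ (n + 1) * deriv h (g x))) l (𝓝 0) := by
    simpa using (hu.add hv).sub (hw.const_mul 2)
  refine hsum.congr' ?_
  filter_upwards [heq] with x hx
  exact (rotationDefect_eq hx).symm

end RotationDefect

lemma pow_add_two_eq_of_mul_sq_eq_zero {K : Type*} [Field K] {n : ℕ} {a b z : K} (hz : z ≠ 0)
    (heq : z ^ n = a ^ n * b ^ 2) (hK : a ^ n * (z * b - a) ^ 2 = 0) :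
    a ^ (n + 2) = z ^ (n + 2) := by
  have ha : a ^ n ≠ 0 := left_ne_zero_of_mul (heq ▸ pow_ne_zero n hz)
  have hzb : z * b = a := sub_eq_zero.mp (pow_eq_zero_iff two_ne_zero |>.mp
    ((mul_eq_zero.mp hK).resolve_left ha))
  linear_combination (-z ^ 2) * heq - (a ^ n * (a + z * b)) * hzb

theorem rotation_lemma_power_general
    (n : ℕ) (U : Set ℂ) (hUopen : IsOpen U)
    (hUsc : SimplyConnectedSpace U) (hU0 : (0 : ℂ) ∉ U)
    (h : ℂ → ℂ) (hdiff : DifferentiableOn ℂ h U)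
    (heq : ∀ z ∈ U, z ^ n = h z ^ n * (deriv h z) ^ 2)
    (γ : ℝ → ℂ) (hγcont : ContinuousOn γ (Set.Icc 0 1))
    (hγU : ∀ t ∈ Set.Ico (0 : ℝ) 1, γ t ∈ U)
    (hγ1 : γ 1 = 0)
    (hγlim : Tendsto (fun t => h (γ t)) (nhdsWithin 1 (Set.Iio 1)) (nhds 0)) :
    ∀ z ∈ U, h z ^ (n + 2) = z ^ (n + 2) := by
  have hzne : ∀ z ∈ U, z ≠ 0 := fun z hz h0 => hU0 (h0 ▸ hz)
  have hderiv : ∀ z ∈ U, HasDerivAt (rotationDefect n h) 0 z := fun z hz =>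
    hasDerivAt_rotationDefect hUopen hdiff heq hz (hzne z hz)
  have hγ0 : γ 0 ∈ U := hγU 0 ⟨le_rfl, zero_lt_one⟩
  have hconst : ∀ z ∈ U, rotationDefect n h z = rotationDefect n h (γ 0) := fun z hz =>
    hUopen.is_const_of_deriv_eq_zero (isPreconnected_iff_preconnectedSpace.mpr inferInstance)
      (fun w hw => (hderiv w hw).differentiableAt.differentiableWithinAt)
      (fun w hw => (hderiv w hw).deriv) hz hγ0
  have hγU' : ∀ᶠ t in 𝓝[<] (1 : ℝ), γ t ∈ U := by
    filter_upwards [Ioo_mem_nhdsLT zero_lt_one] with t ht using hγU t ⟨ht.1.le, ht.2⟩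
  have hlim : Tendsto (fun t => rotationDefect n h (γ t)) (𝓝[<] 1) (𝓝 0) :=
    tendsto_rotationDefect_zero (hγ1 ▸ tendsto_nhdsLT_of_continuousOn_Icc zero_lt_one hγcont)
      hγlim (hγU'.mono fun t ht => heq _ ht)
  have hzero : rotationDefect n h (γ 0) = 0 :=
    tendsto_nhds_unique (tendsto_const_nhds.congr' (hγU'.mono fun t ht => (hconst _ ht).symm)) hlim
  exact fun z hz => pow_add_two_eq_of_mul_sq_eq_zero (hzne z hz) (heq z hz)
    ((hconst z hz).trans hzero)

/-- Rotation lemma, power form: a holomorphic map `h` on a simply connected open set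
`U` avoiding `0`, preserving the quadratic differential `z^n dz^2`
(i.e. `z^n = h z ^ n * (deriv h z)^2`), which extends to send the zero of the
differential to itself along a path, satisfies `h z ^ (n+2) = z ^ (n+2)`. -/
theorem rotation_lemma_power
    (n : ℕ) (U : Set ℂ) (hUne : U.Nonempty) (hUopen : IsOpen U)
    (hUsc : SimplyConnectedSpace U) (hU0 : (0 : ℂ) ∉ U)
    (h : ℂ → ℂ) (hdiff : DifferentiableOn ℂ h U)
    (hne : ∀ z ∈ U, h z ≠ 0)
    (heq : ∀ z ∈ U, z ^ n = h z ^ n * (deriv h z) ^ 2)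
    (γ : ℝ → ℂ) (hγcont : ContinuousOn γ (Set.Icc 0 1))
    (hγU : ∀ t ∈ Set.Ico (0 : ℝ) 1, γ t ∈ U)
    (hγ1 : γ 1 = 0)
    (hγlim : Tendsto (fun t => h (γ t)) (nhdsWithin 1 (Set.Iio 1)) (nhds 0)) :
    ∀ z ∈ U, h z ^ (n + 2) = z ^ (n + 2) :=
  rotation_lemma_power_general n U hUopen hUsc hU0 h hdiff heq γ hγcont hγU hγ1 hγlim
end

section
/- Let n be a natural number and let U ⊆ ℂ be a nonempty open set which is simply connected as a topological subspace and with 0 ∉ U. Let h : ℂ → ℂ be complex-differentiable on U with h(z) ≠ 0 for every z ∈ U, and suppose z^n = h(z)^n · h'(z)^2 for all z ∈ U. Assume there is a continuous path γ : [0,1] → ℂ with γ(t) ∈ U for all t < 1, γ(1) = 0, and h(γ(t)) → 0 as t → 1⁻. Then there exists a natural number j < n+2 such that h(z) = exp(2πij/(n+2)) · z for every z ∈ U. -/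
open Complex Filter Set Topology

/-! The quantity `b = h^(n+2) + z^(n+2) - 2 z h^(n+1) h'` is a first integral of the equation
`z^n = h^n h'^2`: locally it is `(h^((n+2)/2) - z^((n+2)/2))^2`, and the equation says exactly
that `d(h^((n+2)/2)) = ± d(z^((n+2)/2))`. Hence `b` is constant on the connected set
`U`, and it tends to `0` along `γ` because `h ∘ γ → 0` and `γ → 0`. So `b = 0` on `U`, which forces
`h^(n+2) = z^(n+2)`: the continuous function `h z / z` takes values in the discrete set of
`(n+2)`-th roots of unity and is therefore constant. -/

theorem sq_mul_pow_succ_mul_eq {R : Type*} [CommRing R] {n : ℕ} {z a d : R}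
    (h : z ^ n = a ^ n * d ^ 2) : (z * a ^ (n + 1) * d) ^ 2 = a ^ (n + 2) * z ^ (n + 2) := by
  linear_combination (-(z ^ 2) * a ^ (n + 2)) * h

theorem exists_exp_eq_of_pow_eq_one {m : ℕ} (hm : m ≠ 0) {ζ : ℂ} (hζ : ζ ^ m = 1) :
    ∃ j < m, exp (2 * Real.pi * I * j / m) = ζ := by
  have : NeZero m := ⟨hm⟩
  obtain ⟨j, hj, rfl⟩ := (isPrimitiveRoot_exp m hm).eq_pow_of_pow_eq_one hζ
  refine ⟨j, hj, ?_⟩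
  rw [← exp_nat_mul]
  ring_nf

theorem IsPreconnected.exists_eqOn_exp_of_pow_eq_one {X : Type*} [TopologicalSpace X]
    {s : Set X} (hs : IsPreconnected s) {f : X → ℂ} (hf : ContinuousOn f s) {m : ℕ} (hm : m ≠ 0)
    (hpow : ∀ x ∈ s, f x ^ m = 1) : ∃ j < m, ∀ x ∈ s, f x = exp (2 * Real.pi * I * j / m) := by
  set roots : Set ℂ := (fun j : ℕ => exp (2 * Real.pi * I * j / m)) '' Iio m
  have hroots : IsDiscrete roots := ((finite_Iio m).image _).isDiscrete
  have hmaps : MapsTo f s roots := fun x hx => exists_exp_eq_of_pow_eq_one hm (hpow x hx)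
  obtain ⟨-, ⟨j, hj, rfl⟩, hconst⟩ :=
    hs.eqOn_const_of_mapsTo hroots hf hmaps ⟨_, 0, Nat.pos_of_ne_zero hm, rfl⟩
  exact ⟨j, hj, hconst⟩

noncomputable def hopfInvariant (n : ℕ) (h : ℂ → ℂ) (z : ℂ) : ℂ :=
  h z ^ (n + 2) + z ^ (n + 2) - 2 * (z * h z ^ (n + 1) * deriv h z)

theorem pow_eq_pow_of_hopfInvariant_eq_zero {n : ℕ} {h : ℂ → ℂ} {z : ℂ}
    (heq : z ^ n = h z ^ n * deriv h z ^ 2) (hb : hopfInvariant n h z = 0) :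
    h z ^ (n + 2) = z ^ (n + 2) := by
  unfold hopfInvariant at hb
  have hsq : (h z ^ (n + 2) - z ^ (n + 2)) ^ 2 = 0 := by
    linear_combination (h z ^ (n + 2) + z ^ (n + 2) + 2 * (z * h z ^ (n + 1) * deriv h z)) * hb
      + 4 * sq_mul_pow_succ_mul_eq heq
  exact sub_eq_zero.mp (pow_eq_zero_iff two_ne_zero |>.mp hsq)

theorem hasDerivAt_hopfInvariant {n : ℕ} {h : ℂ → ℂ} {z : ℂ} (hh : AnalyticAt ℂ h z)
    (heq : ∀ᶠ w in 𝓝 z, w ^ n = h w ^ n * deriv h w ^ 2) (hz : z ≠ 0) :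
    HasDerivAt (hopfInvariant n h) 0 z := by
  set A := h z
  set d := deriv h z
  set e := deriv (deriv h) z
  have hA : HasDerivAt h d z := hh.differentiableAt.hasDerivAt
  have hd_deriv : HasDerivAt (deriv h) e z := hh.deriv.differentiableAt.hasDerivAt
  have heq_z : z ^ n = A ^ n * d ^ 2 := heq.self_of_nhds
  have hd : d ≠ 0 := by
    rintro hd0
    exact pow_ne_zero n hz (by simpa [hd0] using heq_z)
  -- Differentiate `z^(n+1) h = z h^(n+1) h'^2` (the equation times `z h`): no exponent `n - 1`.
  have hlhs : HasDerivAt (fun w => w ^ (n + 1) * h w) ((n + 1) * z ^ n * A + z ^ (n + 1) * d) z :=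
    ((hasDerivAt_pow (n + 1) z).mul hA).congr_deriv (by push_cast; ring)
  have hrhs : HasDerivAt (fun w => w * h w ^ (n + 1) * deriv h w ^ 2)
      (A ^ (n + 1) * d ^ 2 + (n + 1) * z * A ^ n * d ^ 3 + 2 * z * A ^ (n + 1) * d * e) z :=
    (((hasDerivAt_id' z).mul (hA.pow (n + 1))).mul (hd_deriv.pow 2)).congr_deriv
      (by simp only [Pi.mul_apply, Pi.pow_apply, add_tsub_cancel_right, A, d, e]; push_cast; ring)
  have hderiv_eq := hlhs.unique <| hrhs.congr_of_eventuallyEq <| by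
    filter_upwards [heq] with w hw
    linear_combination (w * h w) * hw
  have hb : HasDerivAt (hopfInvariant n h) ((n + 2) * A ^ (n + 1) * d + (n + 2) * z ^ (n + 1)
      - 2 * (A ^ (n + 1) * d + (n + 1) * z * A ^ n * d ^ 2 + z * A ^ (n + 1) * e)) z :=
    (((hA.pow (n + 2)).add (hasDerivAt_pow (n + 2) z)).sub
      ((((hasDerivAt_id' z).mul (hA.pow (n + 1))).mul hd_deriv).const_mul 2)).congr_deriv
      (by simp only [Pi.mul_apply, Pi.pow_apply, add_tsub_cancel_right, A, d, e]; push_cast; ring)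
  convert hb using 1
  refine mul_right_cancel₀ hd ?_
  linear_combination -hderiv_eq + (n + 1) * (A - z * d) * heq_z

theorem tendsto_hopfInvariant_zero {α : Type*} {l : Filter α} {n : ℕ} {h : ℂ → ℂ} {x : α → ℂ}
    (hx : Tendsto x l (𝓝 0)) (hhx : Tendsto (fun t => h (x t)) l (𝓝 0))
    (heq : ∀ᶠ t in l, x t ^ n = h (x t) ^ n * deriv h (x t) ^ 2) :
    Tendsto (fun t => hopfInvariant n h (x t)) l (𝓝 0) := by
  have hF : Tendsto (fun t => h (x t) ^ (n + 2)) l (𝓝 0) := by simpa using hhx.pow (n + 2)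
  have hG : Tendsto (fun t => x t ^ (n + 2)) l (𝓝 0) := by simpa using hx.pow (n + 2)
  have hS : Tendsto (fun t => x t * h (x t) ^ (n + 1) * deriv h (x t)) l (𝓝 0) := by
    rw [tendsto_zero_iff_norm_tendsto_zero]
    have hFG : Tendsto (fun t => √‖h (x t) ^ (n + 2) * x t ^ (n + 2)‖) l (𝓝 0) := by
      simpa using (hF.mul hG).norm.sqrt
    refine hFG.congr' ?_
    filter_upwards [heq] with t ht
    rw [← sq_mul_pow_succ_mul_eq ht, norm_pow, Real.sqrt_sq (norm_nonneg _)]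
  simpa [hopfInvariant] using (hF.add hG).sub (hS.const_mul 2)

theorem IsPreconnected.hopfInvariant_eq {n : ℕ} {h : ℂ → ℂ} {U : Set ℂ} (hU : IsPreconnected U)
    (hUopen : IsOpen U) (hU0 : (0 : ℂ) ∉ U) (hdiff : DifferentiableOn ℂ h U)
    (heq : ∀ z ∈ U, z ^ n = h z ^ n * deriv h z ^ 2) {z w : ℂ} (hz : z ∈ U) (hw : w ∈ U) :
    hopfInvariant n h z = hopfInvariant n h w := by
  have hderiv : ∀ x ∈ U, HasDerivAt (hopfInvariant n h) 0 x := fun x hx =>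
    hasDerivAt_hopfInvariant (hdiff.analyticOnNhd hUopen x hx)
      (eventually_of_mem (hUopen.mem_nhds hx) heq) (ne_of_mem_of_not_mem hx hU0)
  exact hUopen.is_const_of_deriv_eq_zero hU
    (fun x hx => (hderiv x hx).differentiableAt.differentiableWithinAt)
    (fun x hx => (hderiv x hx).deriv) hz hw

theorem rotation_lemma_general
    (n : ℕ) (U : Set ℂ) (hUopen : IsOpen U)
    (hUsc : SimplyConnectedSpace U) (hU0 : (0 : ℂ) ∉ U)
    (h : ℂ → ℂ) (hdiff : DifferentiableOn ℂ h U)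
    (heq : ∀ z ∈ U, z ^ n = h z ^ n * (deriv h z) ^ 2)
    (γ : ℝ → ℂ) (hγcont : ContinuousOn γ (Set.Icc 0 1))
    (hγU : ∀ t ∈ Set.Ico (0 : ℝ) 1, γ t ∈ U)
    (hγ1 : γ 1 = 0)
    (hγlim : Tendsto (fun t => h (γ t)) (nhdsWithin 1 (Set.Iio 1)) (nhds 0)) :
    ∃ j : ℕ, j < n + 2 ∧
      ∀ z ∈ U, h z = Complex.exp (2 * Real.pi * Complex.I * j / (n + 2)) * z := by
  have hU : IsPreconnected U := isPreconnected_iff_preconnectedSpace.mpr inferInstance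
  have hz0 : ∀ z ∈ U, z ≠ 0 := fun z hz => ne_of_mem_of_not_mem hz hU0
  have hγ0 : Tendsto γ (𝓝[<] 1) (𝓝 0) := by
    rw [← nhdsWithin_Ico_eq_nhdsLT zero_lt_one, ← hγ1]
    exact (hγcont 1 (right_mem_Icc.mpr zero_le_one)).mono Ico_subset_Icc_self
  have hγU' : ∀ᶠ t in 𝓝[<] 1, γ t ∈ U := eventually_of_mem (Ico_mem_nhdsLT zero_lt_one) hγU
  have hb0 : ∀ z ∈ U, hopfInvariant n h z = 0 := fun z hz =>
    tendsto_nhds_unique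
      (tendsto_const_nhds.congr' <|
        hγU'.mono fun t ht => hU.hopfInvariant_eq hUopen hU0 hdiff heq hz ht)
      (tendsto_hopfInvariant_zero hγ0 hγlim (hγU'.mono fun t ht => heq _ ht))
  obtain ⟨j, hj, hroot⟩ := hU.exists_eqOn_exp_of_pow_eq_one (f := fun z => h z / z)
    (hdiff.continuousOn.div continuousOn_id hz0) (m := n + 2) (by omega) fun z hz => by
      rw [div_pow, pow_eq_pow_of_hopfInvariant_eq_zero (heq z hz) (hb0 z hz),
        div_self (pow_ne_zero _ (hz0 z hz))]
  refine ⟨j, hj, fun z hz => ?_⟩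
  rw [← div_mul_cancel₀ (h z) (hz0 z hz), hroot z hz]
  norm_num

/-- Rotation lemma: near a zero of order `n` of the Hopf differential, in a natural
coordinate where the differential is `z^n dz^2`, a holomorphic map `h` leaving the
differential invariant and fixing the zero is a rational rotation of angle
`2πj/(n+2)`. -/
theorem rotation_lemma
    (n : ℕ) (U : Set ℂ) (hUne : U.Nonempty) (hUopen : IsOpen U)
    (hUsc : SimplyConnectedSpace U) (hU0 : (0 : ℂ) ∉ U)
    (h : ℂ → ℂ) (hdiff : DifferentiableOn ℂ h U)
    (hne : ∀ z ∈ U, h z ≠ 0)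
    (heq : ∀ z ∈ U, z ^ n = h z ^ n * (deriv h z) ^ 2)
    (γ : ℝ → ℂ) (hγcont : ContinuousOn γ (Set.Icc 0 1))
    (hγU : ∀ t ∈ Set.Ico (0 : ℝ) 1, γ t ∈ U)
    (hγ1 : γ 1 = 0)
    (hγlim : Tendsto (fun t => h (γ t)) (nhdsWithin 1 (Set.Iio 1)) (nhds 0)) :
    ∃ j : ℕ, j < n + 2 ∧
      ∀ z ∈ U, h z = Complex.exp (2 * Real.pi * Complex.I * j / (n + 2)) * z :=
  rotation_lemma_general n U hUopen hUsc hU0 h hdiff heq γ hγcont hγU hγ1 hγlim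
end

section
/- Let X be a topological space, let r ≥ 1 be a natural number, let ε > 0, and let g : ℂ → X be continuous on the open ball B of radius ε centered at 0 in ℂ, satisfying g(exp(2πi/r)·z) = g(z) for every z ∈ B. Then there exists a map G : ℂ → X which is continuous on the open ball of radius ε^r centered at 0 and satisfies g(z) = G(z^r) for every z ∈ B. -/
/-!
The rotation by `ζ = exp (2πi/r)` generates the group of `r`-th roots of unity, so `g` is constant
on the fibres of `z ↦ z ^ r` over the disk and hence equals `G (z ^ r)` for `G` defined through any
choice of `r`-th roots. `G` need not be continuous a priori, but `z ↦ z ^ r` is an open map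
(open mapping theorem), and an open surjection carries continuity of `G ∘ (· ^ r)` down to `G`.
-/

open Set Metric Function

theorem IsOpenMap.continuousOn_image_of_eqOn_comp {α β γ : Type*} [TopologicalSpace α]
    [TopologicalSpace β] [TopologicalSpace γ] {f : α → β} {g : α → γ} {G : β → γ} {s : Set α}
    (hf : IsOpenMap f) (hs : IsOpen s) (hg : ContinuousOn g s) (hfac : EqOn g (G ∘ f) s) :
    ContinuousOn G (f '' s) := by
  rw [continuousOn_open_iff (hf s hs)]
  intro V hV
  obtain ⟨U, hU, hgU⟩ := continuousOn_iff'.mp hg V hV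
  have : f '' s ∩ G ⁻¹' V = f '' (U ∩ s) := by
    rw [← hgU]
    ext w
    constructor
    · rintro ⟨⟨z, hz, rfl⟩, hzV⟩
      exact ⟨z, ⟨show g z ∈ V by rwa [hfac hz], hz⟩, rfl⟩
    · rintro ⟨z, ⟨hzV, hz⟩, rfl⟩
      exact ⟨⟨z, hz, rfl⟩, show G (f z) ∈ V by rwa [← Function.comp_apply (f := G), ← hfac hz]⟩
  rw [this]
  exact hf _ (hU.inter hs)

theorem apply_pow_mul_eq_of_apply_mul_eq {M X : Type*} [Monoid M] {ζ : M} {s : Set M}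
    {g : M → X} (hs : MapsTo (ζ * ·) s s) (hg : ∀ z ∈ s, g (ζ * z) = g z) (k : ℕ) {z : M}
    (hz : z ∈ s) : g (ζ ^ k * z) = g z := by
  induction k generalizing z with
  | zero => rw [pow_zero, one_mul]
  | succ k ih => rw [pow_succ, mul_assoc, ih (hs hz), hg z hz]

namespace IsPrimitiveRoot

variable {K : Type*} [Field K] {ζ : K} {n : ℕ} [NeZero n]

theorem exists_pow_mul_eq_of_pow_eq (hζ : IsPrimitiveRoot ζ n) {x y : K} (hxy : x ^ n = y ^ n) :
    ∃ i, x = ζ ^ i * y := by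
  rcases eq_or_ne y 0 with rfl | hy
  · rw [zero_pow (NeZero.ne n), pow_eq_zero_iff (NeZero.ne n)] at hxy
    exact ⟨0, by rw [mul_zero, hxy]⟩
  · obtain ⟨i, -, hi⟩ := hζ.eq_pow_of_pow_eq_one (ξ := x / y)
      (by rw [div_pow, hxy, div_self (pow_ne_zero _ hy)])
    exact ⟨i, by rw [hi, div_mul_cancel₀ _ hy]⟩

theorem apply_eq_of_pow_eq {X : Type*} (hζ : IsPrimitiveRoot ζ n) {s : Set K} {g : K → X}
    (hs : MapsTo (ζ * ·) s s) (hg : ∀ z ∈ s, g (ζ * z) = g z) {x y : K} (hy : y ∈ s)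
    (hxy : x ^ n = y ^ n) : g x = g y := by
  obtain ⟨i, rfl⟩ := hζ.exists_pow_mul_eq_of_pow_eq hxy
  exact apply_pow_mul_eq_of_apply_mul_eq hs hg i hy

end IsPrimitiveRoot

namespace Complex

theorem isOpenMap_pow {n : ℕ} (hn : n ≠ 0) : IsOpenMap fun z : ℂ => z ^ n := by
  have hdeg : (Polynomial.X ^ n : Polynomial ℂ).natDegree ≠ 0 := by simpa using hn
  simpa using (Polynomial.isOpenQuotientMap_eval _ hdeg).isOpenMap

theorem pow_image_ball {n : ℕ} (hn : n ≠ 0) {ε : ℝ} (hε : 0 ≤ ε) :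
    (· ^ n) '' ball (0 : ℂ) ε = ball 0 (ε ^ n) := by
  ext w
  simp only [mem_image, mem_ball_zero_iff]
  constructor
  · rintro ⟨z, hz, rfl⟩
    rw [norm_pow]
    exact pow_lt_pow_left₀ hz (norm_nonneg _) hn
  · intro hw
    obtain ⟨z, rfl⟩ := IsAlgClosed.exists_pow_nat_eq w (Nat.pos_of_ne_zero hn)
    rw [norm_pow] at hw
    exact ⟨z, (pow_lt_pow_iff_left₀ (norm_nonneg _) hε hn).mp hw, rfl⟩

end Complex

/-- A map on a disk invariant under the rotation `z ↦ e^{2πi/r} z` factors through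
the degree-`r` branched covering `z ↦ z^r`. -/
theorem factor_through_branched_cover
    (X : Type*) [TopologicalSpace X] (r : ℕ) (hr : 1 ≤ r) (ε : ℝ) (hε : 0 < ε)
    (g : ℂ → X) (hcont : ContinuousOn g (Metric.ball (0 : ℂ) ε))
    (hinv : ∀ z ∈ Metric.ball (0 : ℂ) ε,
      g (Complex.exp (2 * Real.pi * Complex.I / r) * z) = g z) :
    ∃ G : ℂ → X, ContinuousOn G (Metric.ball (0 : ℂ) (ε ^ r)) ∧
      ∀ z ∈ Metric.ball (0 : ℂ) ε, g z = G (z ^ r) := by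
  have hr0 : r ≠ 0 := by omega
  have : NeZero r := ⟨hr0⟩
  set ζ := Complex.exp (2 * Real.pi * Complex.I / r)
  have hζ : IsPrimitiveRoot ζ r := Complex.isPrimitiveRoot_exp r hr0
  set S := ball (0 : ℂ) ε
  have hS : MapsTo (ζ * ·) S S := fun z hz => by
    simpa [S, hζ.norm'_eq_one hr0] using hz
  let G : ℂ → X := fun w => g (invFunOn (· ^ r) S w)
  have hfac : EqOn g (G ∘ (· ^ r)) S := fun z hz =>
    hζ.apply_eq_of_pow_eq hS hinv (invFunOn_mem ⟨z, hz, rfl⟩) (invFunOn_eq ⟨z, hz, rfl⟩).symm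
  refine ⟨G, ?_, fun z hz => hfac hz⟩
  rw [← Complex.pow_image_ball hr0 hε.le]
  exact (Complex.isOpenMap_pow hr0).continuousOn_image_of_eqOn_comp isOpen_ball hcont hfac
end

section
/- Define u : ℝ × ℝ → ℝ × ℝ by u(x, y) = (x, x·y) and let D be the open unit ball centered at the origin of ℝ × ℝ. Then: (1) for every open set D₁ ⊆ D containing (0,0) there exists a nonempty open set D₂ ⊆ ℝ × ℝ with D₂ ⊆ u(D₁); and (2) there is no open set D′ containing (0,0) with D′ ⊆ u(D). -/
/-!
Off the line `x = 0` the map `u(x, y) = (x, x y)` is a homeomorphism onto its image, with inverse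
`(x, y) ↦ (x, y / x)`; since every open neighbourhood of the origin meets that region, its image
contains a nonempty open set. On the other hand `u` collapses the line `x = 0` to the origin, so
no point `(0, t)` with `t ≠ 0` lies in the image of `u`, while every neighbourhood of the origin
contains such points.
-/

open Set

def mulFst (p : ℝ × ℝ) : ℝ × ℝ := (p.1, p.1 * p.2)

lemma mulFst_image_eq {V : Set (ℝ × ℝ)} (hV : V ⊆ Prod.fst ⁻¹' {0}ᶜ) :
    mulFst '' V = Prod.fst ⁻¹' {0}ᶜ ∩ (fun q : ℝ × ℝ => (q.1, q.2 / q.1)) ⁻¹' V := by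
  ext ⟨a, b⟩
  constructor
  · rintro ⟨⟨x, y⟩, hp, hxy⟩
    obtain ⟨rfl, rfl⟩ := Prod.mk.inj hxy
    have hx : x ≠ 0 := hV hp
    simpa [hx] using hp
  · rintro ⟨ha, hp⟩
    refine ⟨(a, b / a), hp, ?_⟩
    simp [mulFst, mul_div_cancel₀ b ha]

lemma isOpen_mulFst_image {V : Set (ℝ × ℝ)} (hV : IsOpen V) (hV0 : V ⊆ Prod.fst ⁻¹' {0}ᶜ) :
    IsOpen (mulFst '' V) := by
  rw [mulFst_image_eq hV0]
  refine ContinuousOn.isOpen_inter_preimage ?_ (isOpen_compl_singleton.preimage continuous_fst) hV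
  exact continuousOn_fst.prodMk (continuousOn_snd.div continuousOn_fst fun q hq => hq)

lemma mk_zero_mem_range_mulFst_iff {t : ℝ} : ((0 : ℝ), t) ∈ range mulFst ↔ t = 0 := by
  constructor
  · rintro ⟨⟨x, y⟩, hxy⟩
    obtain ⟨rfl, rfl⟩ := Prod.mk.inj hxy
    exact zero_mul y
  · rintro rfl
    exact ⟨0, by simp [mulFst]⟩

lemma dense_fst_ne_zero : Dense (Prod.fst ⁻¹' {0}ᶜ : Set (ℝ × ℝ)) :=
  (dense_compl_singleton 0).preimage isOpenMap_fst

theorem unique_continuation_fails_general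
    (u : ℝ × ℝ → ℝ × ℝ) (hu : ∀ x y : ℝ, u (x, y) = (x, x * y))
    (D : Set (ℝ × ℝ)) :
    (∀ D₁ : Set (ℝ × ℝ), D₁ ⊆ D → IsOpen D₁ → ((0 : ℝ), (0 : ℝ)) ∈ D₁ →
      ∃ D₂ : Set (ℝ × ℝ), D₂.Nonempty ∧ IsOpen D₂ ∧ D₂ ⊆ u '' D₁) ∧
    (¬ ∃ D' : Set (ℝ × ℝ), IsOpen D' ∧ ((0 : ℝ), (0 : ℝ)) ∈ D' ∧ D' ⊆ u '' D) := by
  obtain rfl : u = mulFst := funext fun p => hu p.1 p.2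
  refine ⟨fun D₁ _ hD₁ h0 => ?_, ?_⟩
  · refine ⟨mulFst '' (D₁ ∩ Prod.fst ⁻¹' {0}ᶜ), ?_, ?_, image_mono inter_subset_left⟩
    · exact (dense_fst_ne_zero.inter_open_nonempty D₁ hD₁ ⟨_, h0⟩).image mulFst
    · exact isOpen_mulFst_image
        (hD₁.inter (isOpen_compl_singleton.preimage continuous_fst)) inter_subset_right
  · rintro ⟨D', hD', h0, hsub⟩
    obtain ⟨t, ht, ht0⟩ := (dense_compl_singleton (0 : ℝ)).inter_open_nonempty _
      (hD'.preimage (continuous_const.prodMk continuous_id)) ⟨0, h0⟩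
    obtain ⟨p, -, hp⟩ := hsub ht
    exact ht0 (mk_zero_mem_range_mulFst_iff.mp ⟨p, hp⟩)

/-- Failure of unique continuation for harmonic maps: for `u(x,y) = (x, xy)`,
every open neighborhood `D₁ ⊆ D` of the origin in the unit disk `D` has image
containing a nonempty open set, but no open neighborhood of the origin is
contained in `u(D)`. -/
theorem unique_continuation_fails
    (u : ℝ × ℝ → ℝ × ℝ) (hu : ∀ x y : ℝ, u (x, y) = (x, x * y))
    (D : Set (ℝ × ℝ)) (hD : D = Metric.ball (0 : ℝ × ℝ) 1) :
    (∀ D₁ : Set (ℝ × ℝ), D₁ ⊆ D → IsOpen D₁ → ((0 : ℝ), (0 : ℝ)) ∈ D₁ →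
      ∃ D₂ : Set (ℝ × ℝ), D₂.Nonempty ∧ IsOpen D₂ ∧ D₂ ⊆ u '' D₁) ∧
    (¬ ∃ D' : Set (ℝ × ℝ), IsOpen D' ∧ ((0 : ℝ), (0 : ℝ)) ∈ D' ∧ D' ⊆ u '' D) :=
  unique_continuation_fails_general u hu D
end

section
/- Let n and r be natural numbers with r ≥ 1, let ε > 0, and let θ : ℂ → ℂ be continuous at 0 and satisfy z^n = r²·z^(2r−2)·θ(z^r) for every z ∈ ℂ with 0 < |z| < ε. Then r divides n + 2, moreover 2r ≤ n + 2, and θ(ζ) = ζ^((n+2−2r)/r)/r² for every ζ with 0 < |ζ| < ε^r. -/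
/-!
Cancelling `z ^ (2r - 2)` from the pullback identity leaves `r² z^k θ(z^r) = 1` near `0` if
`2r - 2 = n + k` with `k > 0`, which continuity of `θ` at `0` rules out; hence
`θ(z^r) = z^m / r²` with `m = n + 2 - 2r`. For a primitive `r`-th root of unity `ω`, the points
`z` and `ωz` have the same `r`-th power, so `ω^m = 1` and `r ∣ m`. Finally every small `ζ` is an
`r`-th power `z^r`, and `z^m = ζ^(m/r)`.
-/

open Filter Topology

theorem IsPrimitiveRoot.dvd_of_mul_pow_eq_pow {K : Type*} [CommRing K] [IsDomain K]
    {ω z : K} {r m : ℕ} (hω : IsPrimitiveRoot ω r) (hz : z ≠ 0) (h : (ω * z) ^ m = z ^ m) :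
    r ∣ m := by
  refine hω.dvd_of_pow_eq_one m (mul_right_cancel₀ (pow_ne_zero m hz) ?_)
  rw [← mul_pow, h, one_mul]

theorem le_of_eventually_pow_mul_eq_pow {𝕜 : Type*} [NontriviallyNormedField 𝕜]
    {g : 𝕜 → 𝕜} {a b : ℕ} (hg : ContinuousAt g 0)
    (h : ∀ᶠ z in 𝓝[≠] 0, z ^ a * g z = z ^ b) : a ≤ b := by
  by_contra! hba
  obtain ⟨k, rfl⟩ := Nat.exists_eq_add_of_lt hba
  have h_eq_one : ∀ᶠ z in 𝓝[≠] (0 : 𝕜), z ^ (k + 1) * g z = 1 := by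
    filter_upwards [h, self_mem_nhdsWithin] with z hz hz0
    refine mul_left_cancel₀ (pow_ne_zero b hz0) ?_
    linear_combination hz
  have h_tendsto_zero : Tendsto (fun z : 𝕜 => z ^ (k + 1) * g z) (𝓝[≠] 0) (𝓝 0) := by
    refine tendsto_nhdsWithin_of_tendsto_nhds ?_
    simpa using ((continuous_pow (k + 1)).tendsto 0).mul hg.tendsto
  have h_tendsto_one : Tendsto (fun z : 𝕜 => z ^ (k + 1) * g z) (𝓝[≠] 0) (𝓝 1) :=
    tendsto_const_nhds.congr' (h_eq_one.mono fun _ hz => hz.symm)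
  exact zero_ne_one (tendsto_nhds_unique h_tendsto_zero h_tendsto_one)

theorem dvd_of_forall_comp_pow_eq {θ : ℂ → ℂ} {r m : ℕ} {c : ℂ} {ε : ℝ} (hr : r ≠ 0)
    (hε : 0 < ε) (h : ∀ z : ℂ, 0 < ‖z‖ → ‖z‖ < ε → θ (z ^ r) = z ^ m / c) (hc : c ≠ 0) :
    r ∣ m := by
  have hω := Complex.isPrimitiveRoot_exp r hr
  set z : ℂ := ((ε / 2 : ℝ) : ℂ)
  have hz : ‖z‖ = ε / 2 := by simp [z, abs_of_pos hε]
  have hωz : ‖Complex.exp (2 * Real.pi * Complex.I / r) * z‖ = ε / 2 := by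
    rw [norm_mul, hω.norm'_eq_one hr, one_mul, hz]
  refine hω.dvd_of_mul_pow_eq_pow (z := z) (norm_pos_iff.mp (by rw [hz]; positivity)) ?_
  have h1 := h z (by rw [hz]; positivity) (by rw [hz]; linarith)
  have h2 := h _ (by rw [hωz]; positivity) (by rw [hωz]; linarith)
  rw [mul_pow, hω.pow_eq_one, one_mul, h1] at h2
  exact ((div_left_inj' hc).mp h2).symm

theorem eq_pow_div_of_comp_pow_eq {K : Type*} [NormedField K] [IsAlgClosed K]
    {θ : K → K} {r m : ℕ} {c : K} {ε : ℝ} (hr : r ≠ 0) (hε : 0 ≤ ε) (hrm : r ∣ m)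
    (h : ∀ z : K, 0 < ‖z‖ → ‖z‖ < ε → θ (z ^ r) = z ^ m / c)
    {ζ : K} (hζ : 0 < ‖ζ‖) (hζε : ‖ζ‖ < ε ^ r) : θ ζ = ζ ^ (m / r) / c := by
  obtain ⟨z, rfl⟩ := IsAlgClosed.exists_pow_nat_eq ζ (Nat.pos_of_ne_zero hr)
  rw [norm_pow] at hζ hζε
  have hz : 0 < ‖z‖ := by
    by_contra! hz
    simp [le_antisymm hz (norm_nonneg z), zero_pow hr] at hζ
  rw [h z hz (lt_of_pow_lt_pow_left₀ r hε hζε), ← pow_mul, Nat.mul_div_cancel' hrm]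

/-- Constraints on the ramification order: if the Hopf differential `z^n dz²`
pulls back as `z^n = r² z^(2r−2) θ(z^r)` near the origin, with `θ` continuous
at `0`, then `r ∣ n+2`, `2r ≤ n+2`, and `θ(ζ) = ζ^((n+2−2r)/r)/r²`. -/
theorem ramification_constraints
    (n r : ℕ) (hr : 1 ≤ r) (ε : ℝ) (hε : 0 < ε)
    (θ : ℂ → ℂ) (hθ : ContinuousAt θ 0)
    (heq : ∀ z : ℂ, 0 < ‖z‖ → ‖z‖ < ε →
      z ^ n = (r : ℂ) ^ 2 * z ^ (2 * r - 2) * θ (z ^ r)) :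
    r ∣ (n + 2) ∧ 2 * r ≤ n + 2 ∧
      ∀ ζ : ℂ, 0 < ‖ζ‖ → ‖ζ‖ < ε ^ r →
        θ ζ = ζ ^ ((n + 2 - 2 * r) / r) / (r : ℂ) ^ 2 := by
  have hr0 : r ≠ 0 := by omega
  have hrC : (r : ℂ) ^ 2 ≠ 0 := pow_ne_zero 2 (Nat.cast_ne_zero.mpr hr0)
  have hle : 2 * r - 2 ≤ n := by
    refine le_of_eventually_pow_mul_eq_pow (g := fun z => (r : ℂ) ^ 2 * θ (z ^ r))
      (continuousAt_const.mul (hθ.comp_of_eq (continuousAt_id.pow r) (zero_pow hr0))) ?_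
    filter_upwards [inter_mem_nhdsWithin {0}ᶜ (Metric.ball_mem_nhds (0 : ℂ) hε)]
      with z ⟨hz0, hzε⟩
    rw [heq z (norm_pos_iff.mpr hz0) (mem_ball_zero_iff.mp hzε)]
    ring
  have hθ_pow : ∀ z : ℂ, 0 < ‖z‖ → ‖z‖ < ε →
      θ (z ^ r) = z ^ (n + 2 - 2 * r) / (r : ℂ) ^ 2 := by
    intro z hz hzε
    have hsplit : z ^ n = z ^ (2 * r - 2) * z ^ (n + 2 - 2 * r) := by
      rw [← pow_add]; congr 1; omega
    rw [eq_div_iff hrC]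
    refine mul_left_cancel₀ (pow_ne_zero (2 * r - 2) (norm_pos_iff.mp hz)) ?_
    rw [← hsplit, heq z hz hzε]
    ring
  have hdvd := dvd_of_forall_comp_pow_eq hr0 hε hθ_pow hrC
  refine ⟨?_, by omega, fun ζ => eq_pow_div_of_comp_pow_eq hr0 hε.le hdvd hθ_pow⟩
  rw [show n + 2 = n + 2 - 2 * r + r * 2 by omega]
  exact hdvd.add (dvd_mul_right r 2)
end
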